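/- Define h(x,y) = (1/(x+y+1))·[x + x(x+1)/(2(x+y))] − ψ(x+y+1) + ψ(y+1). For every y > 0: if 1/√2 ≤ x < 1 then h(x,y) > 0, and if x > 1 then h(x,y) < 0. -/

import Mathlib

noncomputable def psi (z : ℝ) : ℝ := deriv (fun t => Real.log (Real.Gamma t)) z

noncomputable def h (x y : ℝ) : ℝ :=
  (1 / (x + y + 1)) * (x + x * (x + 1) / (2 * (x + y))) - psi (x + y + 1) + psi (y + 1)

/-!
Write `ψ(z) = log z - 1/(2z) + D(z)` (`D = psiDefect`). Then `h(x,y) = H(x,y) - D(x+y+1) + ψ(y+1)`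
with `H = hApprox` elementary, and since `h(1,y) = 0`,
`h(x,y) = (H(x,y) - H(1,y)) - (D(x+y+1) - D(y+2))`. Both brackets have the sign of `1 - x`:
* `∂ₓH` has the sign of `-(4x³ + 2x² + (4x² - 2)y)`, which is `≤ 0` as soon as `2x² ≥ 1`;
* `D` is strictly increasing on `(0, ∞)`: `D(t+1) - D(t) = g(t)` with `g = psiDefectStep`
  strictly decreasing, and `D(t) → 0` because convexity of `log ∘ Γ` gives
  `log(z-1) ≤ ψ(z) ≤ log z`; hence `D(b) - D(a) = ∑ₖ (g(a+k) - g(b+k)) > 0` for `a < b`.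
-/

open Real Set Filter Topology

lemma differentiableAt_log_Gamma {t : ℝ} (ht : 0 < t) :
    DifferentiableAt ℝ (log ∘ Gamma) t :=
  (differentiableAt_Gamma fun m => ((neg_nonpos.mpr m.cast_nonneg).trans_lt ht).ne').log
    (Gamma_pos_of_pos ht).ne'

lemma log_Gamma_add_one {t : ℝ} (ht : 0 < t) : log (Gamma (t + 1)) = log (Gamma t) + log t := by
  rw [Gamma_add_one ht.ne', log_mul ht.ne' (Gamma_pos_of_pos ht).ne', add_comm]

lemma psi_add_one {t : ℝ} (ht : 0 < t) : psi (t + 1) = psi t + t⁻¹ := by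
  change deriv (log ∘ Gamma) (t + 1) = deriv (log ∘ Gamma) t + t⁻¹
  rw [← deriv_comp_add_const, ← deriv_log,
    ← deriv_add (differentiableAt_log_Gamma ht) (differentiableAt_log ht.ne')]
  apply EventuallyEq.deriv_eq
  filter_upwards [eventually_gt_nhds ht] using fun u hu => log_Gamma_add_one hu

lemma slope_log_Gamma {t : ℝ} (ht : 0 < t) : slope (log ∘ Gamma) t (t + 1) = log t := by
  rw [slope_def_field, Function.comp_apply, Function.comp_apply, log_Gamma_add_one ht]
  ring

lemma psi_le_log {z : ℝ} (hz : 0 < z) : psi z ≤ log z :=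
  slope_log_Gamma hz ▸ convexOn_log_Gamma.deriv_le_slope hz (by linarith : 0 < z + 1)
    (lt_add_one z) (differentiableAt_log_Gamma hz)

lemma log_le_psi_add_one {z : ℝ} (hz : 0 < z) : log z ≤ psi (z + 1) :=
  slope_log_Gamma hz ▸ convexOn_log_Gamma.slope_le_deriv hz (by linarith : 0 < z + 1)
    (lt_add_one z) (differentiableAt_log_Gamma (by linarith))

noncomputable def psiDefect (z : ℝ) : ℝ := psi z - log z + 1 / (2 * z)

noncomputable def psiDefectStep (t : ℝ) : ℝ :=
  t⁻¹ - log (t + 1) + log t - (2 * t * (t + 1))⁻¹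

lemma psiDefect_add_one {t : ℝ} (ht : 0 < t) :
    psiDefect (t + 1) = psiDefect t + psiDefectStep t := by
  unfold psiDefect psiDefectStep
  rw [psi_add_one ht]
  field_simp
  ring

lemma psiDefect_add_nat {t : ℝ} (ht : 0 < t) (n : ℕ) :
    psiDefect (t + n) = psiDefect t + ∑ k ∈ Finset.range n, psiDefectStep (t + k) := by
  induction n with
  | zero => simp
  | succ n ih =>
    rw [Nat.cast_succ, ← add_assoc, psiDefect_add_one (by positivity), ih, Finset.sum_range_succ,
      add_assoc]

lemma hasDerivAt_psiDefectStep {t : ℝ} (ht : 0 < t) :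
    HasDerivAt psiDefectStep (-1 / (2 * t ^ 2 * (t + 1) ^ 2)) t := by
  have hlin : HasDerivAt (fun u : ℝ => u + 1) 1 t := (hasDerivAt_id t).add_const 1
  have hquad : HasDerivAt (fun u : ℝ => 2 * u * (u + 1)) (2 * (t + 1) + 2 * t) t := by
    simpa using ((hasDerivAt_id t).const_mul (2 : ℝ)).fun_mul hlin
  have := (((hasDerivAt_inv ht.ne').sub (hlin.log (by positivity))).add
    (hasDerivAt_log ht.ne')).sub (hquad.inv (by positivity))
  refine this.congr_deriv ?_
  field_simp
  ring

lemma strictAntiOn_psiDefectStep : StrictAntiOn psiDefectStep (Ioi 0) := by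
  refine strictAntiOn_of_hasDerivWithinAt_neg (convex_Ioi 0)
    (fun t ht => (hasDerivAt_psiDefectStep ht).continuousAt.continuousWithinAt)
    (fun t ht => (hasDerivAt_psiDefectStep (interior_subset ht)).hasDerivWithinAt) ?_
  rw [interior_Ioi]
  intro t (ht : 0 < t)
  have : (0 : ℝ) < 2 * t ^ 2 * (t + 1) ^ 2 := by positivity
  exact div_neg_of_neg_of_pos (by norm_num) this

lemma abs_psiDefect_le {z : ℝ} (hz : 1 < z) : |psiDefect z| ≤ (z - 1)⁻¹ := by
  have hz0 : 0 < z := by linarith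
  have hz1 : 0 < z - 1 := by linarith
  have hlower : log (z - 1) ≤ psi z := by
    simpa using log_le_psi_add_one hz1
  have hlog : log z - log (z - 1) ≤ (z - 1)⁻¹ := by
    rw [← log_div hz0.ne' hz1.ne']
    refine (log_le_sub_one_of_pos (by positivity)).trans_eq ?_
    field_simp
    ring
  have hhalf : 1 / (2 * z) ≤ (z - 1)⁻¹ := by
    rw [one_div]
    exact inv_anti₀ hz1 (by linarith)
  have := psi_le_log hz0
  rw [abs_le]
  constructor <;> unfold psiDefect <;> linarith [show 0 < 1 / (2 * z) by positivity]

lemma tendsto_psiDefect_atTop : Tendsto psiDefect atTop (𝓝 0) := by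
  refine squeeze_zero_norm' ?_
    (tendsto_inv_atTop_zero.comp (tendsto_atTop_add_const_right _ (-1) tendsto_id))
  filter_upwards [eventually_gt_atTop 1] with z hz
  simpa [sub_eq_add_neg] using abs_psiDefect_le hz

lemma strictMonoOn_psiDefect : StrictMonoOn psiDefect (Ioi 0) := by
  intro a (ha : 0 < a) b (hb : 0 < b) hab
  have hstep_sub_le (n : ℕ) (hn : 1 ≤ n) : psiDefectStep a - psiDefectStep b ≤
      (psiDefect b - psiDefect a) - (psiDefect (b + n) - psiDefect (a + n)) := by
    have hterm (k : ℕ) : 0 ≤ psiDefectStep (a + k) - psiDefectStep (b + k) :=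
      sub_nonneg.mpr (strictAntiOn_psiDefectStep.antitoneOn (mem_Ioi.mpr (by positivity))
        (mem_Ioi.mpr (by positivity)) (by linarith))
    calc psiDefectStep a - psiDefectStep b
        ≤ ∑ k ∈ Finset.range n, (psiDefectStep (a + k) - psiDefectStep (b + k)) := by
          simpa using Finset.single_le_sum (fun k _ => hterm k) (Finset.mem_range.mpr hn)
      _ = _ := by
          rw [Finset.sum_sub_distrib, psiDefect_add_nat ha, psiDefect_add_nat hb]
          ring
  have hlim : Tendsto (fun n : ℕ => (psiDefect b - psiDefect a) -
      (psiDefect (b + n) - psiDefect (a + n))) atTop (𝓝 (psiDefect b - psiDefect a)) := by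
    have hshift (c : ℝ) : Tendsto (fun n : ℕ => psiDefect (c + n)) atTop (𝓝 0) :=
      tendsto_psiDefect_atTop.comp (tendsto_atTop_add_const_left _ c tendsto_natCast_atTop_atTop)
    simpa using tendsto_const_nhds.sub ((hshift b).sub (hshift a))
  have hle := ge_of_tendsto hlim (eventually_atTop.mpr ⟨1, hstep_sub_le⟩)
  linarith [strictAntiOn_psiDefectStep ha hb hab]

noncomputable def hApprox (x y : ℝ) : ℝ :=
  (1 / (x + y + 1)) * (x + x * (x + 1) / (2 * (x + y))) - log (x + y + 1) +
    1 / (2 * (x + y + 1))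

lemma h_eq_hApprox (x y : ℝ) : h x y = hApprox x y - psiDefect (x + y + 1) + psi (y + 1) := by
  unfold h hApprox psiDefect
  ring

lemma h_one {y : ℝ} (hy : -1 < y) : h 1 y = 0 := by
  have hy1 : 0 < y + 1 := by linarith
  have hy1' : 1 + y ≠ 0 := by linarith
  have hy2 : y + 1 + 1 ≠ 0 := by linarith
  unfold h
  rw [show 1 + y + 1 = y + 1 + 1 by ring, psi_add_one hy1]
  field_simp
  ring

lemma hasDerivAt_hApprox {x y : ℝ} (hxy : 0 < x + y) :
    HasDerivAt (fun u => hApprox u y)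
      (-((4 * x ^ 3 + 2 * x ^ 2 + (4 * x ^ 2 - 2) * y) /
        (4 * (x + y) ^ 2 * (x + y + 1) ^ 2))) x := by
  have hlin : HasDerivAt (fun u : ℝ => u + y + 1) 1 x := by
    simpa using ((hasDerivAt_id x).add_const y).add_const 1
  have hfrac : HasDerivAt (fun u : ℝ => u * (u + 1) / (2 * (u + y)))
      (((x + 1 + x) * (2 * (x + y)) - x * (x + 1) * 2) / (2 * (x + y)) ^ 2) x := by
    simpa using ((hasDerivAt_id x).fun_mul ((hasDerivAt_id x).add_const 1)).fun_div
      (((hasDerivAt_id x).add_const y).const_mul 2) (by positivity)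
  have := ((((hasDerivAt_const x (1 : ℝ)).fun_div hlin (by positivity)).fun_mul
    ((hasDerivAt_id' x).fun_add hfrac)).fun_sub (hlin.log (by positivity))).fun_add
    ((hasDerivAt_const x (1 : ℝ)).fun_div (hlin.const_mul 2) (by positivity))
  refine this.congr_deriv ?_
  field_simp
  ring

lemma antitoneOn_hApprox {y : ℝ} (hy : 0 ≤ y) :
    AntitoneOn (fun x => hApprox x y) (Ici (1 / √2)) := by
  have hc : 0 < 1 / √2 := by positivity
  have hxy {x : ℝ} (hx : x ∈ Ici (1 / √2)) : 0 < x + y := by linarith [hc.trans_le hx]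
  refine antitoneOn_of_hasDerivWithinAt_nonpos (convex_Ici _)
    (fun x hx => (hasDerivAt_hApprox (hxy hx)).continuousAt.continuousWithinAt)
    (fun x hx => (hasDerivAt_hApprox (hxy (interior_subset hx))).hasDerivWithinAt) ?_
  rw [interior_Ici]
  intro x (hx : 1 / √2 < x)
  have hx0 : 0 < x := hc.trans hx
  -- this is where the threshold `1 / √2` comes from
  have hsq : 1 ≤ 2 * x ^ 2 := by
    have := pow_le_pow_left₀ hc.le hx.le 2
    rw [div_pow, one_pow, sq_sqrt zero_le_two] at this
    linarith
  have hnum : 0 ≤ 4 * x ^ 3 + 2 * x ^ 2 + (4 * x ^ 2 - 2) * y := by nlinarith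
  exact neg_nonpos.mpr (div_nonneg hnum (by positivity))

theorem stmt_6 (y : ℝ) (hy : 0 < y) :
    (∀ x : ℝ, 1 / Real.sqrt 2 ≤ x → x < 1 → 0 < h x y) ∧
    (∀ x : ℝ, 1 < x → h x y < 0) := by
  have hc : 1 / √2 ≤ 1 := (div_le_one (by positivity)).mpr (one_le_sqrt.mpr one_le_two)
  have hsplit (x : ℝ) : h x y =
      (hApprox x y - hApprox 1 y) - (psiDefect (x + y + 1) - psiDefect (1 + y + 1)) := by
    rw [← sub_zero (h x y), ← h_one (by linarith : -1 < y), h_eq_hApprox, h_eq_hApprox]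
    ring
  have hpos {x : ℝ} (hx : 0 < x) : x + y + 1 ∈ Ioi 0 := mem_Ioi.mpr (by positivity)
  constructor
  · intro x hx1 hx2
    have hx0 : 0 < x := (by positivity : (0 : ℝ) < 1 / √2).trans_le hx1
    have hA := antitoneOn_hApprox hy.le hx1 hc hx2.le
    have hD := strictMonoOn_psiDefect (hpos hx0) (hpos one_pos) (by linarith)
    rw [hsplit]
    linarith
  · intro x hx
    have hA := antitoneOn_hApprox hy.le hc (hc.trans hx.le) hx.le
    have hD := strictMonoOn_psiDefect (hpos one_pos) (hpos (one_pos.trans hx)) (by linarith)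
    rw [hsplit]
    linarith
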